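/- Let Φ ∈ ℝ^{m×N} satisfy Φ Φᵀ = diag(ψ_1,…,ψ_m) with every ψ_i ≥ 0, let γ > 0, y ∈ ℝ^m, and v ∈ ℝ^N. Then the unique minimizer θ* = (ΦᵀΦ + γI)⁻¹(Φᵀ y + γ v) of θ ↦ (1/2)‖y − Φθ‖₂² + (γ/2)‖θ − v‖₂² admits the closed form θ* = v + Φᵀ w, where w ∈ ℝ^m has entries w_i = (y_i − (Φ v)_i)/(γ + ψ_i) for i = 1,…,m. -/

import Mathlib

/-!
The normal equations `(ΦᵀΦ + γI)θ = Φᵀy + γv` say `Φᵀ(y - Φθ) = γ(θ - v)`. At a solution `θ₀` the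
cross terms of the objective cancel, leaving `f θ = f θ₀ + ½‖Φ(θ - θ₀)‖² + (γ/2)‖θ - θ₀‖²`, so `θ₀`
is the strict minimiser. Because `ΦΦᵀ = diag ψ`, the residual of `v + Φᵀw` is
`y - Φv - ψ ⊙ w = γw` precisely when `(γ + ψᵢ)wᵢ = yᵢ - (Φv)ᵢ`, so `v + Φᵀw` solves the same
normal equations, whose matrix is positive definite. The denominators `γ + ψᵢ` are positive since
`ψᵢ = ∑ⱼ Φᵢⱼ²`.
-/

open Matrix BigOperators

section RidgeUpdate

variable {ι κ : Type*} [Fintype ι] [Fintype κ]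

/-- The θ-subproblem of the ADMM iteration. -/
noncomputable def ridgeObjective (Φ : Matrix ι κ ℝ) (y : ι → ℝ) (γ : ℝ) (v θ : κ → ℝ) : ℝ :=
  (1/2) * ∑ i, (y i - (Φ *ᵥ θ) i)^2 + (γ/2) * ∑ j, (θ j - v j)^2

lemma sum_add_sq_eq (a b : κ → ℝ) :
    ∑ j, (a j + b j)^2 = ∑ j, (a j)^2 + 2 * ∑ j, a j * b j + ∑ j, (b j)^2 := by
  rw [Finset.mul_sum, ← Finset.sum_add_distrib, ← Finset.sum_add_distrib]
  exact Finset.sum_congr rfl fun j _ => by ring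

lemma posDef_transpose_mul_add_smul_one [DecidableEq κ] (Φ : Matrix ι κ ℝ) {γ : ℝ}
    (hγ : 0 < γ) : (Φᵀ * Φ + γ • (1 : Matrix κ κ ℝ)).PosDef := by
  refine PosDef.posSemidef_add ?_ (PosDef.one.smul hγ)
  simpa using posSemidef_conjTranspose_mul_self Φ

lemma mulVec_eq_iff_transpose_mulVec_residual [DecidableEq κ] (Φ : Matrix ι κ ℝ)
    (y : ι → ℝ) (γ : ℝ) (v θ : κ → ℝ) :
    (Φᵀ * Φ + γ • (1 : Matrix κ κ ℝ)) *ᵥ θ = Φᵀ *ᵥ y + γ • v ↔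
      Φᵀ *ᵥ (y - Φ *ᵥ θ) = γ • (θ - v) := by
  have h : (Φᵀ * Φ + γ • (1 : Matrix κ κ ℝ)) *ᵥ θ - (Φᵀ *ᵥ y + γ • v)
      = -(Φᵀ *ᵥ (y - Φ *ᵥ θ) - γ • (θ - v)) := by
    rw [add_mulVec, smul_mulVec, one_mulVec, mulVec_sub, mulVec_mulVec, smul_sub]
    abel
  rw [← sub_eq_zero, h, neg_eq_zero, sub_eq_zero]

lemma ridgeObjective_eq_of_normal (Φ : Matrix ι κ ℝ) (y : ι → ℝ) (γ : ℝ) (v : κ → ℝ)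
    {θ₀ : κ → ℝ} (h₀ : Φᵀ *ᵥ (y - Φ *ᵥ θ₀) = γ • (θ₀ - v)) (θ : κ → ℝ) :
    ridgeObjective Φ y γ v θ = ridgeObjective Φ y γ v θ₀
      + (1/2) * ∑ i, ((Φ *ᵥ (θ - θ₀)) i)^2 + (γ/2) * ∑ j, ((θ - θ₀) j)^2 := by
  set d := θ - θ₀
  have hcross : (y - Φ *ᵥ θ₀) ⬝ᵥ Φ *ᵥ d = γ * ((θ₀ - v) ⬝ᵥ d) := by
    rw [dotProduct_mulVec, ← mulVec_transpose, h₀, smul_dotProduct, smul_eq_mul]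
  have hres : ∑ i, (y i - (Φ *ᵥ θ) i)^2
      = ∑ i, ((y - Φ *ᵥ θ₀) i + -(Φ *ᵥ d) i)^2 := by
    refine Finset.sum_congr rfl fun i _ => ?_
    simp only [d, mulVec_sub, Pi.sub_apply]
    ring
  have hprox : ∑ j, (θ j - v j)^2 = ∑ j, ((θ₀ - v) j + d j)^2 := by
    refine Finset.sum_congr rfl fun j _ => ?_
    simp only [d, Pi.sub_apply]
    ring
  unfold ridgeObjective
  rw [hres, hprox, sum_add_sq_eq, sum_add_sq_eq]
  simp only [dotProduct, mul_neg, Finset.sum_neg_distrib, neg_sq, Pi.sub_apply] at hcross ⊢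
  linear_combination (-1 : ℝ) * hcross

lemma ridgeObjective_lt_of_normal (Φ : Matrix ι κ ℝ) (y : ι → ℝ) {γ : ℝ} (hγ : 0 < γ)
    (v : κ → ℝ) {θ₀ : κ → ℝ} (h₀ : Φᵀ *ᵥ (y - Φ *ᵥ θ₀) = γ • (θ₀ - v)) {θ : κ → ℝ}
    (hθ : θ ≠ θ₀) : ridgeObjective Φ y γ v θ₀ < ridgeObjective Φ y γ v θ := by
  obtain ⟨j, hj⟩ := Function.ne_iff.mp (sub_ne_zero.mpr hθ)
  have hdata : 0 ≤ ∑ i, ((Φ *ᵥ (θ - θ₀)) i)^2 := Finset.sum_nonneg fun i _ => sq_nonneg _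
  have hprox : 0 < ∑ j, ((θ - θ₀) j)^2 :=
    Finset.sum_pos' (fun j _ => sq_nonneg _) ⟨j, Finset.mem_univ j, pow_two_pos_of_ne_zero hj⟩
  rw [ridgeObjective_eq_of_normal Φ y γ v h₀ θ]
  nlinarith [mul_pos hγ hprox]

lemma transpose_mulVec_residual_of_mul_transpose_eq_diagonal [DecidableEq ι] (Φ : Matrix ι κ ℝ) {ψ : ι → ℝ}
    (hΦ : Φ * Φᵀ = diagonal ψ) (y : ι → ℝ) (γ : ℝ) (v : κ → ℝ) {w : ι → ℝ}
    (hw : ∀ i, (γ + ψ i) * w i = y i - (Φ *ᵥ v) i) :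
    Φᵀ *ᵥ (y - Φ *ᵥ (v + Φᵀ *ᵥ w)) = γ • ((v + Φᵀ *ᵥ w) - v) := by
  have hres : y - Φ *ᵥ (v + Φᵀ *ᵥ w) = γ • w := by
    funext i
    rw [mulVec_add, mulVec_mulVec, hΦ]
    simp only [Pi.sub_apply, Pi.add_apply, Pi.smul_apply, smul_eq_mul, mulVec_diagonal]
    linarith [hw i]
  rw [hres, mulVec_smul, add_sub_cancel_left]

lemma diagonal_nonneg_of_mul_transpose_eq [DecidableEq ι] (Φ : Matrix ι κ ℝ) {ψ : ι → ℝ}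
    (hΦ : Φ * Φᵀ = diagonal ψ) (i : ι) : 0 ≤ ψ i := by
  have := (posSemidef_self_mul_conjTranspose Φ).diag_nonneg (i := i)
  rwa [conjTranspose_eq_transpose_of_trivial, hΦ, diagonal_apply_eq] at this

end RidgeUpdate

theorem stmt_8_general (m N : ℕ) (Φ : Matrix (Fin m) (Fin N) ℝ) (ψ : Fin m → ℝ)
    (hΦ : Φ * Φᵀ = Matrix.diagonal ψ)
    (γ : ℝ) (hγ : 0 < γ) (y : Fin m → ℝ) (v : Fin N → ℝ)
    (θstar : Fin N → ℝ)
    (hθ : θstar = ((Φᵀ * Φ + γ • (1 : Matrix (Fin N) (Fin N) ℝ))⁻¹).mulVec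
        (Φᵀ.mulVec y + γ • v))
    (w : Fin m → ℝ) (hw : ∀ i, w i = (y i - Φ.mulVec v i) / (γ + ψ i)) :
    (∀ θ, θ ≠ θstar →
      (1/2) * ∑ i, (y i - Φ.mulVec θstar i)^2 + (γ/2) * ∑ j, (θstar j - v j)^2
        < (1/2) * ∑ i, (y i - Φ.mulVec θ i)^2 + (γ/2) * ∑ j, (θ j - v j)^2) ∧
    θstar = v + Φᵀ.mulVec w := by
  have hA := (posDef_transpose_mul_add_smul_one Φ hγ).isUnit
  have hθstar : Φᵀ *ᵥ (y - Φ *ᵥ θstar) = γ • (θstar - v) := by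
    rw [← mulVec_eq_iff_transpose_mulVec_residual, hθ, mulVec_mulVec,
      mul_nonsing_inv _ ((isUnit_iff_isUnit_det _).mp hA), one_mulVec]
  refine ⟨fun θ hne => ridgeObjective_lt_of_normal Φ y hγ v hθstar hne, ?_⟩
  have hclosed : Φᵀ *ᵥ (y - Φ *ᵥ (v + Φᵀ *ᵥ w)) = γ • ((v + Φᵀ *ᵥ w) - v) := by
    refine transpose_mulVec_residual_of_mul_transpose_eq_diagonal Φ hΦ y γ v fun i => ?_
    have hdenom : γ + ψ i ≠ 0 := (add_pos_of_pos_of_nonneg hγ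
      (diagonal_nonneg_of_mul_transpose_eq Φ hΦ i)).ne'
    rw [hw i, mul_div_cancel₀ _ hdenom]
  rw [← mulVec_eq_iff_transpose_mulVec_residual] at hθstar hclosed
  exact mulVec_injective_iff_isUnit.mpr hA (hθstar.trans hclosed.symm)

/-- Elementwise ADMM θ-update of DeSCI: when ΦΦᵀ = diag(ψ), ψ_i ≥ 0, γ > 0,
the unique minimizer θ* = (ΦᵀΦ + γI)⁻¹(Φᵀy + γv) of
θ ↦ (1/2)‖y − Φθ‖² + (γ/2)‖θ − v‖² equals v + Φᵀw with
w_i = (y_i − (Φv)_i)/(γ + ψ_i). -/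
theorem stmt_8 (m N : ℕ) (Φ : Matrix (Fin m) (Fin N) ℝ) (ψ : Fin m → ℝ)
    (hΦ : Φ * Φᵀ = Matrix.diagonal ψ) (hψ : ∀ i, 0 ≤ ψ i)
    (γ : ℝ) (hγ : 0 < γ) (y : Fin m → ℝ) (v : Fin N → ℝ)
    (θstar : Fin N → ℝ)
    (hθ : θstar = ((Φᵀ * Φ + γ • (1 : Matrix (Fin N) (Fin N) ℝ))⁻¹).mulVec
        (Φᵀ.mulVec y + γ • v))
    (w : Fin m → ℝ) (hw : ∀ i, w i = (y i - Φ.mulVec v i) / (γ + ψ i)) :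
    (∀ θ, θ ≠ θstar →
      (1/2) * ∑ i, (y i - Φ.mulVec θstar i)^2 + (γ/2) * ∑ j, (θstar j - v j)^2
        < (1/2) * ∑ i, (y i - Φ.mulVec θ i)^2 + (γ/2) * ∑ j, (θ j - v j)^2) ∧
    θstar = v + Φᵀ.mulVec w :=
  stmt_8_general m N Φ ψ hΦ γ hγ y v θstar hθ w hw
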